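/- Let $X$ satisfy $P(1)$ and be invertible near $q$, with inverse $\tilde{X}$. If $a \in \mathbb{Z}_{\geq 0}^n \setminus \{0\}$ satisfies $a \cdot d + d_\beta = d_1 + d_\gamma$, then $\frac{\partial^a \tilde{X}^\gamma_\beta}{\partial z^a}(q) = -\frac{1}{X^\gamma_\gamma(q) X^\beta_\beta(q)} \frac{\partial^a X^\gamma_\beta}{\partial z^a}(q)$. -/

import Mathlib

open MvPolynomial Matrix

noncomputable section

variable {n : ℕ}

/-- Pullback of polynomials along the linear map with matrix `M`:
`(pback M F)(v) = F (M *ᵥ v)`.  The pullback `g^*F` of the paper is `pback (g⁻¹).val F`. -/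
def pback (M : Matrix (Fin n) (Fin n) ℂ) :
    MvPolynomial (Fin n) ℂ →ₐ[ℂ] MvPolynomial (Fin n) ℂ :=
  aeval fun i => ∑ j, C (M i j) * X j

/-- Multi-index partial derivative `∂^a/∂z^a` of a polynomial (in the standard coordinates). -/
def mderiv (a : Fin n → ℕ) (F : MvPolynomial (Fin n) ℂ) : MvPolynomial (Fin n) ℂ :=
  (List.finRange n).foldr (fun i acc => (fun p => pderiv i p)^[a i] acc) F

/-- The linear coordinate `z^α = ∑_j P_{α j} u^j` of the coordinate system given by `P`. -/
def coordPoly (P : GL (Fin n) ℂ) (α : Fin n) : MvPolynomial (Fin n) ℂ :=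
  ∑ j, C (P.val α j) * X j

/-- `∂^a F/∂z^a` evaluated at `q`, where `z = P u` are the coordinates given by `P`. -/
def zderivAt (P : GL (Fin n) ℂ) (a : Fin n → ℕ) (F : MvPolynomial (Fin n) ℂ)
    (q : Fin n → ℂ) : ℂ :=
  eval (P.val *ᵥ q) (mderiv a (pback (P⁻¹).val F))

/-- `g` is a (complex) reflection: it fixes a hyperplane pointwise and is not the identity. -/
def IsReflection (g : GL (Fin n) ℂ) : Prop :=
  g ≠ 1 ∧
    Module.finrank ℂ (LinearMap.range (Matrix.toLin' (g.val - 1))) = 1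

/-- A finite complex reflection group: a finite subgroup generated by its reflections. -/
def IsReflectionGroup (G : Subgroup (GL (Fin n) ℂ)) : Prop :=
  Finite G ∧ Subgroup.closure {g | g ∈ G ∧ IsReflection g} = G

/-- A regular vector: it lies on no reflection hyperplane of `G`. -/
def IsRegularVec (G : Subgroup (GL (Fin n) ℂ)) (q : Fin n → ℂ) : Prop :=
  q ≠ 0 ∧ ∀ g ∈ G, IsReflection g → g.val *ᵥ q ≠ q

/-- A `ζ`-regular element of `G`: its `ζ`-eigenspace contains a regular vector. -/
def IsZetaRegular (G : Subgroup (GL (Fin n) ℂ)) (g : GL (Fin n) ℂ) (ζ : ℂ) : Prop :=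
  g ∈ G ∧ ∃ q, IsRegularVec G q ∧ g.val *ᵥ q = ζ • q

/-- A set of basic invariants of `G` with degrees `d`. -/
structure BasicInvariants (G : Subgroup (GL (Fin n) ℂ)) (d : Fin n → ℕ)
    (x : Fin n → MvPolynomial (Fin n) ℂ) : Prop where
  pos : ∀ α, 0 < d α
  homog : ∀ α, (x α).IsHomogeneous (d α)
  invariant : ∀ g ∈ G, ∀ α, pback (g : GL (Fin n) ℂ).val (x α) = x α
  indep : AlgebraicIndependent ℂ x
  gen : ∀ F : MvPolynomial (Fin n) ℂ, (∀ g ∈ G, pback (g : GL (Fin n) ℂ).val F = F) →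
    F ∈ Algebra.adjoin ℂ (Set.range x)

/-- An admissible triplet `(g, ζ, q)`; the degrees are arranged so that `d 0` is the highest. -/
structure AdmissibleTriplet [NeZero n] (G : Subgroup (GL (Fin n) ℂ)) (d : Fin n → ℕ)
    (g : GL (Fin n) ℂ) (ζ : ℂ) (q : Fin n → ℂ) : Prop where
  prim : IsPrimitiveRoot ζ (d 0)
  reg : IsZetaRegular G g ζ
  regq : IsRegularVec G q
  eig : g.val *ᵥ q = ζ • q

/-- `P` gives a `(g,ζ)`-graded coordinate system: `g^* z^α = ζ^{d_α-1} z^α`. -/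
def GradedCoords (g : GL (Fin n) ℂ) (ζ : ℂ) (d : Fin n → ℕ) (P : GL (Fin n) ℂ) : Prop :=
  ∀ α, pback (g⁻¹).val (coordPoly P α) = C (ζ ^ ((d α : ℤ) - 1)) * coordPoly P α

/-- The multi-index `e_β`. -/
def unitIdx (β : Fin n) : Fin n → ℕ := fun j => if j = β then 1 else 0

/-- `x` is compatible with the coordinate system given by `P` at `q`:
`∂x^α/∂z^β (q) = δ^α_β`. -/
def Compatible (P : GL (Fin n) ℂ) (q : Fin n → ℂ)
    (x : Fin n → MvPolynomial (Fin n) ℂ) : Prop :=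
  ∀ α β, zderivAt P (unitIdx β) (x α) q = if α = β then 1 else 0

/-- `x` is good: the derivatives `∂^a x^α/∂z^a` vanish at `q` for every `a ∈ I_α^{(0)}`. -/
def IsGood [NeZero n] (P : GL (Fin n) ℂ) (q : Fin n → ℂ) (d : Fin n → ℕ)
    (x : Fin n → MvPolynomial (Fin n) ℂ) : Prop :=
  ∀ α (a : Fin n → ℕ), (∑ β, a β * d β) = d α → 2 ≤ ∑ β, a β →
    zderivAt P a (x α) q = 0

/-- Multi-index partial derivative of a function on `ℂ^n`. -/
def mpd (a : Fin n → ℕ) (f : (Fin n → ℂ) → ℂ) : (Fin n → ℂ) → ℂ :=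
  (List.finRange n).foldr
    (fun i acc => (fun g v => fderiv ℂ g v (Pi.single i 1))^[a i] acc) f

/-- `f` is a rational function which is regular at `q`. -/
def RegRat (q : Fin n → ℂ) (f : (Fin n → ℂ) → ℂ) : Prop :=
  ∃ p s : MvPolynomial (Fin n) ℂ, eval q s ≠ 0 ∧
    ∀ v, eval v s ≠ 0 → f v = eval v p / eval v s

/-- Condition `P(i)`: the value at `q` is diagonal and nonvanishing derivatives at `q`
satisfy `a·d + d_β = d_γ + k d_1` with `k ≥ i`. -/
def CondP [NeZero n] (d : Fin n → ℕ) (q : Fin n → ℂ) (i : ℕ)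
    (M : Fin n → Fin n → (Fin n → ℂ) → ℂ) : Prop :=
  (∀ γ β, γ ≠ β → M γ β q = 0) ∧
    ∀ γ β (a : Fin n → ℕ), a ≠ 0 → mpd a (M γ β) q ≠ 0 →
      ∃ k : ℕ, i ≤ k ∧ (∑ α, a α * d α) + d β = d γ + k * d 0

/-- Condition `Q(j,h)`: nonvanishing derivatives at `q` satisfy
`a·d + h + d_β = d_γ + k d_1` with `k ≥ j`. -/
def CondQ [NeZero n] (d : Fin n → ℕ) (q : Fin n → ℂ) (j h : ℕ)
    (M : Fin n → Fin n → (Fin n → ℂ) → ℂ) : Prop :=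
  ∀ γ β (a : Fin n → ℕ), mpd a (M γ β) q ≠ 0 →
    ∃ k : ℕ, j ≤ k ∧ (∑ α, a α * d α) + h + d β = d γ + k * d 0

/-- Entrywise product of matrices of functions. -/
def matMulF (Xm Ym : Fin n → Fin n → (Fin n → ℂ) → ℂ) :
    Fin n → Fin n → (Fin n → ℂ) → ℂ :=
  fun γ β v => ∑ ρ, Xm γ ρ v * Ym ρ β v

/-- The `(γ,β)` entry of the Jacobian matrix `J = (∂x^γ/∂z^β)`, expressed in the
coordinates `z = P u`, as a function on coordinate space. -/
def jacEntry (P : GL (Fin n) ℂ) (x : Fin n → MvPolynomial (Fin n) ℂ) (γ β : Fin n) :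
    (Fin n → ℂ) → ℂ :=
  fun v => eval v (pderiv β (pback (P⁻¹).val (x γ)))

/-! ### Auxiliary infrastructure for stmt_16 -/

section Aux16

open ContinuousLinearMap in
/-- Gradient continuous linear map of a polynomial evaluation function. -/
def pgrad (p : MvPolynomial (Fin n) ℂ) (v : Fin n → ℂ) : (Fin n → ℂ) →L[ℂ] ℂ :=
  ∑ i, eval v (pderiv i p) • (ContinuousLinearMap.proj i : ((Fin n) → ℂ) →L[ℂ] ℂ)

lemma pgrad_apply (p : MvPolynomial (Fin n) ℂ) (v w : Fin n → ℂ) :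
    pgrad p v w = ∑ i, eval v (pderiv i p) * w i := by
  simp [pgrad]

lemma pgrad_single (p : MvPolynomial (Fin n) ℂ) (v : Fin n → ℂ) (i : Fin n) :
    pgrad p v (Pi.single i 1) = eval v (pderiv i p) := by
  rw [pgrad_apply]
  rw [Finset.sum_eq_single i]
  · simp
  · intro j _ hj; simp [Pi.single_eq_of_ne hj]
  · simp

lemma eval_pderiv_mul_X (p : MvPolynomial (Fin n) ℂ) (i j : Fin n) (v : Fin n → ℂ) :
    eval v (pderiv i (p * X j)) =
      eval v (pderiv i p) * v j + (if i = j then eval v p else 0) := by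
  classical
  rw [pderiv_mul, map_add, eval_mul, eval_mul, eval_X, pderiv_X]
  by_cases h : i = j
  · subst h; simp
  · rw [Pi.single_eq_of_ne (Ne.symm h)]
    simp [h]

lemma hasFDerivAt_evalPoly (p : MvPolynomial (Fin n) ℂ) (v : Fin n → ℂ) :
    HasFDerivAt (fun w => eval w p) (pgrad p v) v := by
  induction p using MvPolynomial.induction_on with
  | C a =>
      have h0 : pgrad (C a : MvPolynomial (Fin n) ℂ) v = 0 := by
        ext w; simp [pgrad_apply]
      rw [h0]
      simp only [eval_C]
      exact hasFDerivAt_const (a : ℂ) v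
  | add p r hp hq =>
      have h0 : pgrad (p + r) v = pgrad p v + pgrad r v := by
        ext w; simp [pgrad_apply, add_mul, Finset.sum_add_distrib]
      rw [h0]
      exact (hp.add hq).congr_of_eventuallyEq (Filter.Eventually.of_forall fun w => by simp)
  | mul_X p j hp =>
      have hXj : HasFDerivAt (fun w : Fin n → ℂ => w j)
          (ContinuousLinearMap.proj j : ((Fin n) → ℂ) →L[ℂ] ℂ) v :=
        (ContinuousLinearMap.proj j : ((Fin n) → ℂ) →L[ℂ] ℂ).hasFDerivAt
      have h := hp.mul hXj
      have hgrad : pgrad (p * X j) v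
          = eval v p • (ContinuousLinearMap.proj j : ((Fin n) → ℂ) →L[ℂ] ℂ)
            + v j • pgrad p v := by
        ext w
        simp only [ContinuousLinearMap.add_apply, ContinuousLinearMap.smul_apply,
          ContinuousLinearMap.proj_apply, pgrad_apply, smul_eq_mul, Finset.mul_sum]
        rw [Finset.sum_congr rfl (fun i _ => by
          rw [eval_pderiv_mul_X p i j v, add_mul, ite_mul, zero_mul])]
        rw [Finset.sum_add_distrib, Finset.sum_ite_eq' Finset.univ j (fun i => eval v p * w i)]
        simp only [Finset.mem_univ, if_true]
        rw [add_comm]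
        congr 1
        exact Finset.sum_congr rfl fun i _ => by ring
      rw [hgrad]
      refine h.congr_of_eventuallyEq (Filter.Eventually.of_forall fun w => ?_)
      simp

lemma continuous_evalPoly (p : MvPolynomial (Fin n) ℂ) :
    Continuous (fun w : Fin n → ℂ => eval w p) :=
  continuous_iff_continuousAt.2 fun v => (hasFDerivAt_evalPoly p v).differentiableAt.continuousAt

/-- The single directional-derivative step used in `mpd`. -/
def Dstep (i : Fin n) : ((Fin n → ℂ) → ℂ) → ((Fin n → ℂ) → ℂ) :=
  fun g v => fderiv ℂ g v (Pi.single i 1)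

/-- `f` agrees on `U` with a ratio of polynomials whose denominator does not vanish on `U`. -/
def RatOn (U : Set (Fin n → ℂ)) (f : (Fin n → ℂ) → ℂ) : Prop :=
  ∃ p s : MvPolynomial (Fin n) ℂ, (∀ v ∈ U, eval v s ≠ 0) ∧
    ∀ v ∈ U, f v = eval v p / eval v s

lemma ratOn_const (U : Set (Fin n → ℂ)) (c : ℂ) : RatOn U (fun _ => c) :=
  ⟨C c, 1, by simp, by simp⟩

lemma ratOn_mul {U : Set (Fin n → ℂ)} {f g : (Fin n → ℂ) → ℂ}
    (hf : RatOn U f) (hg : RatOn U g) : RatOn U (fun v => f v * g v) := by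
  obtain ⟨p1, s1, hs1, h1⟩ := hf; obtain ⟨p2, s2, hs2, h2⟩ := hg
  refine ⟨p1 * p2, s1 * s2, fun v hv => by
      simp [mul_ne_zero (hs1 v hv) (hs2 v hv)],
    fun v hv => ?_⟩
  show f v * g v = _
  rw [h1 v hv, h2 v hv, eval_mul, eval_mul, div_mul_div_comm]

lemma ratOn_add {U : Set (Fin n → ℂ)} {f g : (Fin n → ℂ) → ℂ}
    (hf : RatOn U f) (hg : RatOn U g) : RatOn U (fun v => f v + g v) := by
  obtain ⟨p1, s1, hs1, h1⟩ := hf; obtain ⟨p2, s2, hs2, h2⟩ := hg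
  refine ⟨p1 * s2 + p2 * s1, s1 * s2, fun v hv => by
      simp [mul_ne_zero (hs1 v hv) (hs2 v hv)],
    fun v hv => ?_⟩
  show f v + g v = _
  rw [h1 v hv, h2 v hv]
  rw [div_add_div _ _ (hs1 v hv) (hs2 v hv)]
  simp [eval_mul, eval_add]
  ring_nf

lemma ratOn_sum {U : Set (Fin n → ℂ)} {ι : Type*} (t : Finset ι)
    (f : ι → (Fin n → ℂ) → ℂ) (hf : ∀ ρ ∈ t, RatOn U (f ρ)) :
    RatOn U (fun v => ∑ ρ ∈ t, f ρ v) := by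
  classical
  induction t using Finset.induction_on with
  | empty => simpa using ratOn_const U 0
  | insert ρ t hρt ih =>
      simp only [Finset.sum_insert hρt]
      exact ratOn_add (hf ρ (Finset.mem_insert_self ρ t))
        (ih fun ρ' hρ' => hf ρ' (Finset.mem_insert_of_mem hρ'))

lemma hasFDerivAt_rat (p s : MvPolynomial (Fin n) ℂ) {v : Fin n → ℂ}
    (hs : eval v s ≠ 0) :
    HasFDerivAt (fun w => eval w p / eval w s)
      (((eval v s) ^ 2)⁻¹ • ((eval v s) • pgrad p v - (eval v p) • pgrad s v)) v := by
  have h1 := hasFDerivAt_evalPoly p v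
  have h2 := hasFDerivAt_evalPoly s v
  have hinv := (hasFDerivAt_inv' (𝕜 := ℂ) hs).comp v h2
  have h := h1.mul hinv
  have hfun : (fun w => eval w p / eval w s)
      = fun w => eval w p * (Inv.inv ∘ fun w => eval w s) w := by
    funext w; simp [div_eq_mul_inv]
  rw [hfun]
  refine (h.congr_fderiv ?_)
  ext w
  simp only [ContinuousLinearMap.add_apply, ContinuousLinearMap.smul_apply,
    ContinuousLinearMap.coe_comp', Function.comp_apply, ContinuousLinearMap.neg_apply,
    ContinuousLinearMap.sub_apply, ContinuousLinearMap.mulLeftRight_apply,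
    smul_eq_mul, Function.comp]
  field_simp
  ring

lemma dstep_ratfun (p s : MvPolynomial (Fin n) ℂ) {v : Fin n → ℂ}
    (hs : eval v s ≠ 0) (i : Fin n) :
    Dstep i (fun w => eval w p / eval w s) v
      = eval v (pderiv i p * s - p * pderiv i s) / eval v (s * s) := by
  have h := (hasFDerivAt_rat p s hs).fderiv
  show fderiv ℂ _ v (Pi.single i 1) = _
  rw [h]
  simp only [ContinuousLinearMap.smul_apply, ContinuousLinearMap.sub_apply,
    smul_eq_mul, pgrad_single, map_sub, eval_mul]
  field_simp

section OnU

variable {U : Set (Fin n → ℂ)} {f g : (Fin n → ℂ) → ℂ} {v : Fin n → ℂ}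

lemma ratOn_eventuallyEq (hU : IsOpen U) (hf : RatOn U f) (hv : v ∈ U) :
    ∃ p s : MvPolynomial (Fin n) ℂ, eval v s ≠ 0 ∧ (∀ w ∈ U, eval w s ≠ 0) ∧
      f =ᶠ[nhds v] (fun w => eval w p / eval w s) ∧
      (∀ w ∈ U, f w = eval w p / eval w s) := by
  obtain ⟨p, s, hs, h⟩ := hf
  exact ⟨p, s, hs v hv, hs,
    Filter.eventuallyEq_of_mem (hU.mem_nhds hv) (fun w hw => h w hw), h⟩

lemma RatOn.diffAt (hf : RatOn U f) (hU : IsOpen U) (hv : v ∈ U) :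
    DifferentiableAt ℂ f v := by
  obtain ⟨p, s, hsv, _, hev, _⟩ := ratOn_eventuallyEq hU hf hv
  exact ((hasFDerivAt_rat p s hsv).congr_of_eventuallyEq hev).differentiableAt

lemma dstep_congrOn (hU : IsOpen U) (h : ∀ w ∈ U, f w = g w) (hv : v ∈ U) (i : Fin n) :
    Dstep i f v = Dstep i g v := by
  have hev : f =ᶠ[nhds v] g := Filter.eventuallyEq_of_mem (hU.mem_nhds hv) h
  show fderiv ℂ f v _ = fderiv ℂ g v _
  rw [hev.fderiv_eq]

lemma RatOn.dstep (hf : RatOn U f) (hU : IsOpen U) (i : Fin n) :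
    RatOn U (Dstep i f) := by
  obtain ⟨p, s, hs, h⟩ := hf
  refine ⟨pderiv i p * s - p * pderiv i s, s * s, fun v hv => by
      simp [mul_ne_zero (hs v hv) (hs v hv)], fun v hv => ?_⟩
  rw [dstep_congrOn hU h hv i, dstep_ratfun p s (hs v hv) i]

lemma dstep_add (hU : IsOpen U) (hf : RatOn U f) (hg : RatOn U g) (hv : v ∈ U) (i : Fin n) :
    Dstep i (fun w => f w + g w) v = Dstep i f v + Dstep i g v := by
  show fderiv ℂ _ v _ = _
  rw [fderiv_fun_add (hf.diffAt hU hv) (hg.diffAt hU hv)]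
  rfl

lemma dstep_mul (hU : IsOpen U) (hf : RatOn U f) (hg : RatOn U g) (hv : v ∈ U) (i : Fin n) :
    Dstep i (fun w => f w * g w) v = Dstep i f v * g v + f v * Dstep i g v := by
  show fderiv ℂ _ v _ = _
  rw [fderiv_fun_mul (hf.diffAt hU hv) (hg.diffAt hU hv)]
  show (f v • fderiv ℂ g v + g v • fderiv ℂ f v) (Pi.single i 1) = _
  simp only [ContinuousLinearMap.add_apply, ContinuousLinearMap.smul_apply, smul_eq_mul]
  show f v * Dstep i g v + g v * Dstep i f v = _
  ring

lemma dstep_const_mul (hU : IsOpen U) (hf : RatOn U f) (hv : v ∈ U) (c : ℂ) (i : Fin n) :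
    Dstep i (fun w => c * f w) v = c * Dstep i f v := by
  show fderiv ℂ _ v _ = _
  rw [fderiv_const_mul (hf.diffAt hU hv) c]
  rfl

lemma dstep_sum {ι : Type*} (t : Finset ι) (A : ι → (Fin n → ℂ) → ℂ)
    (hU : IsOpen U) (hA : ∀ ρ ∈ t, RatOn U (A ρ)) (hv : v ∈ U) (i : Fin n) :
    Dstep i (fun w => ∑ ρ ∈ t, A ρ w) v = ∑ ρ ∈ t, Dstep i (A ρ) v := by
  show fderiv ℂ _ v _ = _
  rw [fderiv_fun_sum (fun ρ hρ => (hA ρ hρ).diffAt hU hv)]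
  simp [Dstep]

lemma dstep_const (c : ℂ) (i : Fin n) : Dstep i (fun _ => c) = fun _ => 0 := by
  funext v
  show fderiv ℂ _ v _ = 0
  rw [fderiv_fun_const]
  rfl

end OnU

/-- Iterated derivative in direction `i`. -/
def Dit (i : Fin n) (k : ℕ) : ((Fin n → ℂ) → ℂ) → ((Fin n → ℂ) → ℂ) :=
  (Dstep i)^[k]

lemma Dit_zero (i : Fin n) (f : (Fin n → ℂ) → ℂ) : Dit i 0 f = f := rfl

lemma Dit_succ (i : Fin n) (k : ℕ) (f : (Fin n → ℂ) → ℂ) :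
    Dit i (k + 1) f = Dstep i (Dit i k f) :=
  Function.iterate_succ_apply' _ _ _

section DitU

variable {U : Set (Fin n → ℂ)} {f g : (Fin n → ℂ) → ℂ}

lemma RatOn.dit (hf : RatOn U f) (hU : IsOpen U) (i : Fin n) (k : ℕ) :
    RatOn U (Dit i k f) := by
  induction k with
  | zero => exact hf
  | succ k ih => rw [Dit_succ]; exact ih.dstep hU i

lemma dit_congrOn (hU : IsOpen U) (h : ∀ w ∈ U, f w = g w) (i : Fin n) (k : ℕ) :
    ∀ w ∈ U, Dit i k f w = Dit i k g w := by
  induction k with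
  | zero => exact h
  | succ k ih =>
      intro w hw
      rw [Dit_succ, Dit_succ]
      exact dstep_congrOn hU ih hw i

lemma dit_const (i : Fin n) (k : ℕ) (c : ℂ) :
    Dit i k (fun _ => c) = fun _ => if k = 0 then c else 0 := by
  induction k with
  | zero => simp [Dit_zero]
  | succ k ih =>
      rw [Dit_succ, ih]
      by_cases h : k = 0 <;> simp [h, dstep_const]

lemma dit_sum {ι : Type*} (t : Finset ι) (A : ι → (Fin n → ℂ) → ℂ)
    (hU : IsOpen U) (hA : ∀ ρ ∈ t, RatOn U (A ρ)) (i : Fin n) (k : ℕ) :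
    ∀ v ∈ U, Dit i k (fun w => ∑ ρ ∈ t, A ρ w) v = ∑ ρ ∈ t, Dit i k (A ρ) v := by
  induction k with
  | zero => intro v _; rfl
  | succ k ih =>
      intro v hv
      rw [Dit_succ]
      rw [dstep_congrOn hU ih hv i]
      rw [dstep_sum t (fun ρ => Dit i k (A ρ)) hU
        (fun ρ hρ => (hA ρ hρ).dit hU i k) hv i]
      exact Finset.sum_congr rfl fun ρ _ => (Dit_succ i k (A ρ) ▸ rfl)

lemma dit_const_mul (hU : IsOpen U) (hf : RatOn U f) (c : ℂ) (i : Fin n) (k : ℕ) :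
    ∀ v ∈ U, Dit i k (fun w => c * f w) v = c * Dit i k f v := by
  induction k with
  | zero => intro v _; rfl
  | succ k ih =>
      intro v hv
      rw [Dit_succ]
      rw [dstep_congrOn hU ih hv i]
      rw [dstep_const_mul hU (hf.dit hU i k) hv c i]
      rw [← Dit_succ]

lemma dit_mul (hU : IsOpen U) (hf : RatOn U f) (hg : RatOn U g) (i : Fin n) (k : ℕ) :
    ∀ v ∈ U, Dit i k (fun w => f w * g w) v
      = ∑ j ∈ Finset.range (k + 1),
          (k.choose j : ℂ) * (Dit i j f v * Dit i (k - j) g v) := by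
  induction k with
  | zero => intro v _; simp [Dit_zero]
  | succ k ih =>
      intro v hv
      rw [Dit_succ]
      rw [dstep_congrOn hU ih hv i]
      rw [dstep_sum (Finset.range (k + 1))
        (fun j => fun w => (k.choose j : ℂ) * (Dit i j f w * Dit i (k - j) g w)) hU
        (fun j _ => ratOn_mul (ratOn_const U _)
          (ratOn_mul (hf.dit hU i j) (hg.dit hU i (k - j)))) hv i]
      have hstep : ∀ j ∈ Finset.range (k + 1),
          Dstep i (fun w => (k.choose j : ℂ) * (Dit i j f w * Dit i (k - j) g w)) v
            = (k.choose j : ℂ) * (Dit i (j + 1) f v * Dit i (k - j) g v)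
              + (k.choose j : ℂ) * (Dit i j f v * Dit i (k - j + 1) g v) := by
        intro j _
        rw [dstep_const_mul hU (ratOn_mul (hf.dit hU i j) (hg.dit hU i (k - j))) hv _ i]
        rw [dstep_mul hU (hf.dit hU i j) (hg.dit hU i (k - j)) hv i]
        rw [← Dit_succ, ← Dit_succ]
        ring
      rw [Finset.sum_congr rfl hstep, Finset.sum_add_distrib]
      -- abbreviate
      set T : ℕ → ℂ := fun j => Dit i j f v * Dit i (k + 1 - j) g v with hT
      have e1 : ∀ j ∈ Finset.range (k + 1),
          (k.choose j : ℂ) * (Dit i (j + 1) f v * Dit i (k - j) g v)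
            = (k.choose j : ℂ) * T (j + 1) := by
        intro j hj
        have : k - j = k + 1 - (j + 1) := by omega
        rw [hT]; simp only []; rw [this]
      have e2 : ∀ j ∈ Finset.range (k + 1),
          (k.choose j : ℂ) * (Dit i j f v * Dit i (k - j + 1) g v)
            = (k.choose j : ℂ) * T j := by
        intro j hj
        have hj' : j < k + 1 := Finset.mem_range.1 hj
        have : k - j + 1 = k + 1 - j := by omega
        rw [hT]; simp only []; rw [this]
      rw [Finset.sum_congr rfl e1, Finset.sum_congr rfl e2]
      -- now the Pascal identity
      have key : ∑ j ∈ Finset.range (k + 2), ((k + 1).choose j : ℂ) * T j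
          = (∑ j ∈ Finset.range (k + 1), (k.choose j : ℂ) * T (j + 1))
            + ∑ j ∈ Finset.range (k + 1), (k.choose j : ℂ) * T j := by
        rw [Finset.sum_range_succ' (fun j => ((k + 1).choose j : ℂ) * T j) (k + 1)]
        have hc : ∀ j, (((k + 1).choose (j + 1) : ℕ) : ℂ)
            = (k.choose j : ℂ) + (k.choose (j + 1) : ℂ) := by
          intro j; rw [Nat.choose_succ_succ]; push_cast; ring
        have : ∀ j ∈ Finset.range (k + 1),
            ((k + 1).choose (j + 1) : ℂ) * T (j + 1)
              = (k.choose j : ℂ) * T (j + 1) + (k.choose (j + 1) : ℂ) * T (j + 1) := by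
          intro j _; rw [hc j]; ring
        rw [Finset.sum_congr rfl this, Finset.sum_add_distrib]
        have hB : ∑ j ∈ Finset.range (k + 1), (k.choose (j + 1) : ℂ) * T (j + 1)
              + ((k + 1).choose 0 : ℂ) * T 0
            = ∑ j ∈ Finset.range (k + 1), (k.choose j : ℂ) * T j := by
          rw [Finset.sum_range_succ (fun j => (k.choose (j + 1) : ℂ) * T (j + 1)) k]
          rw [Finset.sum_range_succ' (fun j => (k.choose j : ℂ) * T j) k]
          simp [Nat.choose_succ_self]
        rw [add_assoc, hB]
      rw [key]

end DitU

/-- Multi-index derivative along a list of coordinates. -/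
def mpdL (L : List (Fin n)) (a : Fin n → ℕ) (f : (Fin n → ℂ) → ℂ) : (Fin n → ℂ) → ℂ :=
  L.foldr (fun i acc => Dit i (a i) acc) f

lemma mpd_eq_mpdL (a : Fin n → ℕ) (f : (Fin n → ℂ) → ℂ) :
    mpd a f = mpdL (List.finRange n) a f := rfl

lemma mpdL_nil (a : Fin n → ℕ) (f : (Fin n → ℂ) → ℂ) : mpdL [] a f = f := rfl

lemma mpdL_cons (i : Fin n) (L : List (Fin n)) (a : Fin n → ℕ) (f : (Fin n → ℂ) → ℂ) :
    mpdL (i :: L) a f = Dit i (a i) (mpdL L a f) := rfl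

/-- Restriction of a multi-index to a list of coordinates. -/
def maskL (L : List (Fin n)) (a : Fin n → ℕ) : Fin n → ℕ :=
  fun i => if i ∈ L then a i else 0

lemma maskL_of_mem {L : List (Fin n)} {i : Fin n} (h : i ∈ L) (a : Fin n → ℕ) :
    maskL L a i = a i := if_pos h

lemma maskL_of_not_mem {L : List (Fin n)} {i : Fin n} (h : i ∉ L) (a : Fin n → ℕ) :
    maskL L a i = 0 := if_neg h

lemma maskL_cons_self (i : Fin n) (L : List (Fin n)) (a : Fin n → ℕ) :
    maskL (i :: L) a i = a i := if_pos List.mem_cons_self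

lemma maskL_cons_ne {k i : Fin n} (h : k ≠ i) (L : List (Fin n)) (a : Fin n → ℕ) :
    maskL (i :: L) a k = maskL L a k := by
  unfold maskL
  by_cases hk : k ∈ L
  · rw [if_pos hk, if_pos (List.mem_cons_of_mem i hk)]
  · rw [if_neg hk, if_neg (by simp [List.mem_cons, h, hk])]

section MpdLU

variable {U : Set (Fin n → ℂ)} {f g : (Fin n → ℂ) → ℂ}

lemma mpdL_idx_congr (L : List (Fin n)) {a b : Fin n → ℕ} (h : ∀ i ∈ L, a i = b i)
    (f : (Fin n → ℂ) → ℂ) : mpdL L a f = mpdL L b f := by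
  induction L with
  | nil => rfl
  | cons i L ih =>
      rw [mpdL_cons, mpdL_cons, h i List.mem_cons_self,
        ih fun k hk => h k (List.mem_cons_of_mem i hk)]

lemma RatOn.mpdL (hf : RatOn U f) (hU : IsOpen U) (L : List (Fin n)) (a : Fin n → ℕ) :
    RatOn U (mpdL L a f) := by
  induction L with
  | nil => exact hf
  | cons i L ih => rw [mpdL_cons]; exact ih.dit hU i (a i)

lemma mpdL_congrOn (hU : IsOpen U) (h : ∀ w ∈ U, f w = g w) (L : List (Fin n))
    (a : Fin n → ℕ) : ∀ w ∈ U, mpdL L a f w = mpdL L a g w := by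
  induction L with
  | nil => exact h
  | cons i L ih =>
      rw [mpdL_cons, mpdL_cons]
      exact dit_congrOn hU ih i (a i)

lemma mpdL_sum {ι : Type*} (t : Finset ι) (A : ι → (Fin n → ℂ) → ℂ)
    (hU : IsOpen U) (hA : ∀ ρ ∈ t, RatOn U (A ρ)) (L : List (Fin n)) (a : Fin n → ℕ) :
    ∀ v ∈ U, mpdL L a (fun w => ∑ ρ ∈ t, A ρ w) v = ∑ ρ ∈ t, mpdL L a (A ρ) v := by
  induction L with
  | nil => intro v _; rfl
  | cons i L ih =>
      intro v hv
      rw [mpdL_cons]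
      rw [dit_congrOn hU ih i (a i) v hv]
      exact dit_sum t (fun ρ => mpdL L a (A ρ)) hU
        (fun ρ hρ => (hA ρ hρ).mpdL hU L a) i (a i) v hv

lemma mpdL_const (L : List (Fin n)) (a : Fin n → ℕ) (c : ℂ) :
    ∃ c' : ℂ, mpdL L a (fun _ => c) = (fun _ => c') ∧ ((∃ i ∈ L, a i ≠ 0) → c' = 0) := by
  induction L with
  | nil => exact ⟨c, rfl, by simp⟩
  | cons i L ih =>
      obtain ⟨c', hc', hz⟩ := ih
      rw [mpdL_cons, hc', dit_const]
      by_cases h : a i = 0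
      · refine ⟨if a i = 0 then c' else 0, rfl, ?_⟩
        rintro ⟨k, hk, hak⟩
        rcases List.mem_cons.1 hk with rfl | hkL
        · exact absurd h hak
        · simp [h, hz ⟨k, hkL, hak⟩]
      · exact ⟨if a i = 0 then c' else 0, rfl, fun _ => by simp [h]⟩

lemma Iic_zero_pi : Finset.Iic (0 : Fin n → ℕ) = {0} := by
  ext b
  simp only [Finset.mem_Iic, Finset.mem_singleton]
  constructor
  · intro h; funext i; exact Nat.le_zero.1 (h i)
  · rintro rfl; exact le_refl _

lemma mpdL_mul (hU : IsOpen U) (hf : RatOn U f) (hg : RatOn U g) :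
    ∀ (L : List (Fin n)), L.Nodup → ∀ (a : Fin n → ℕ), ∀ v ∈ U,
      mpdL L a (fun w => f w * g w) v
        = ∑ b ∈ Finset.Iic (maskL L a),
            (∏ k, ((maskL L a k).choose (b k) : ℂ))
              * (mpdL L b f v * mpdL L (maskL L a - b) g v) := by
  intro L
  induction L with
  | nil =>
      intro _ a v hv
      have hm : maskL [] a = 0 := by funext k; simp [maskL]
      rw [hm, Iic_zero_pi]
      simp [mpdL_nil]
  | cons i L ih =>
      intro hnd a v hv
      have hiL : i ∉ L := (List.nodup_cons.1 hnd).1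
      have hLnd : L.Nodup := (List.nodup_cons.1 hnd).2
      set m : Fin n → ℕ := maskL L a with hm
      set m' : Fin n → ℕ := maskL (i :: L) a with hm'
      have hmi : m i = 0 := maskL_of_not_mem hiL a
      have hm'i : m' i = a i := maskL_cons_self i L a
      have hm'k : ∀ k, k ≠ i → m' k = m k := fun k hk => maskL_cons_ne hk L a
      rw [mpdL_cons]
      rw [dit_congrOn hU (ih hLnd a) i (a i) v hv]
      rw [dit_sum (Finset.Iic m)
        (fun b => fun w => (∏ k, ((m k).choose (b k) : ℂ))
          * (mpdL L b f w * mpdL L (m - b) g w)) hU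
        (fun b _ => ratOn_mul (ratOn_const U _)
          (ratOn_mul (hf.mpdL hU L b) (hg.mpdL hU L (m - b)))) i (a i) v hv]
      have hterm : ∀ b ∈ Finset.Iic m,
          Dit i (a i) (fun w => (∏ k, ((m k).choose (b k) : ℂ))
              * (mpdL L b f w * mpdL L (m - b) g w)) v
            = ∑ j ∈ Finset.range (a i + 1),
                (∏ k, ((m k).choose (b k) : ℂ)) * (((a i).choose j : ℂ)
                  * (Dit i j (mpdL L b f) v * Dit i (a i - j) (mpdL L (m - b) g) v)) := by
        intro b _
        rw [dit_const_mul hU (ratOn_mul (hf.mpdL hU L b) (hg.mpdL hU L (m - b))) _ i (a i) v hv]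
        rw [dit_mul hU (hf.mpdL hU L b) (hg.mpdL hU L (m - b)) i (a i) v hv]
        rw [Finset.mul_sum]
      rw [Finset.sum_congr rfl hterm]
      rw [← Finset.sum_product']
      -- now reindex
      refine Finset.sum_nbij' (fun p => Function.update p.1 i p.2)
        (fun b' => (Function.update b' i 0, b' i)) ?_ ?_ ?_ ?_ ?_
      · -- maps into Iic m'
        rintro ⟨b, j⟩ hp
        rw [Finset.mem_product] at hp
        obtain ⟨hb, hj⟩ := hp
        rw [Finset.mem_Iic] at hb ⊢
        intro k
        dsimp only
        by_cases hk : k = i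
        · subst hk
          rw [Function.update_self, hm'i]
          exact Nat.lt_succ_iff.1 (Finset.mem_range.1 hj)
        · rw [Function.update_of_ne hk, hm'k k hk]
          exact hb k
      · -- maps back
        intro b' hb'
        rw [Finset.mem_Iic] at hb'
        rw [Finset.mem_product]
        constructor
        · rw [Finset.mem_Iic]
          intro k
          dsimp only
          by_cases hk : k = i
          · subst hk; rw [Function.update_self]; exact Nat.zero_le _
          · rw [Function.update_of_ne hk, ← hm'k k hk]; exact hb' k
        · dsimp only
          rw [Finset.mem_range, Nat.lt_succ_iff, ← hm'i]
          exact hb' i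
      · -- left inverse
        rintro ⟨b, j⟩ hp
        rw [Finset.mem_product] at hp
        obtain ⟨hb, _⟩ := hp
        rw [Finset.mem_Iic] at hb
        have hbi : b i = 0 := Nat.le_zero.1 (hmi ▸ hb i)
        dsimp only
        rw [Function.update_idem, Function.update_self,
          show (0 : ℕ) = b i from hbi.symm, Function.update_eq_self]
      · -- right inverse
        intro b' _
        dsimp only
        rw [Function.update_idem, Function.update_eq_self]
      · -- values agree
        rintro ⟨b, j⟩ hp
        rw [Finset.mem_product] at hp
        obtain ⟨hb, hj⟩ := hp
        rw [Finset.mem_Iic] at hb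
        have hbi : b i = 0 := Nat.le_zero.1 (hmi ▸ hb i)
        set b' : Fin n → ℕ := Function.update b i j with hb'
        have hb'i : b' i = j := Function.update_self i j b
        have hb'k : ∀ k, k ≠ i → b' k = b k := fun k hk => Function.update_of_ne hk j b
        -- coefficient
        have hcoef : (∏ k, ((m' k).choose (b' k) : ℂ))
            = ((a i).choose j : ℂ) * ∏ k, ((m k).choose (b k) : ℂ) := by
          rw [← Finset.mul_prod_erase Finset.univ _ (Finset.mem_univ i),
            ← Finset.mul_prod_erase Finset.univ
              (fun k => ((m k).choose (b k) : ℂ)) (Finset.mem_univ i)]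
          rw [hm'i, hb'i, hmi, hbi]
          simp only [Nat.choose_self, Nat.cast_one, mul_one, one_mul]
          congr 1
          refine Finset.prod_congr rfl fun k hk => ?_
          have hki : k ≠ i := (Finset.mem_erase.1 hk).1
          rw [hm'k k hki, hb'k k hki]
        -- first factor
        have hF : mpdL (i :: L) b' f = Dit i j (mpdL L b f) := by
          rw [mpdL_cons, hb'i, mpdL_idx_congr L (fun k hk => hb'k k (fun h => hiL (h ▸ hk))) f]
        -- second factor
        have hsub : ∀ k, k ≠ i → (m' - b') k = (m - b) k := by
          intro k hk
          show m' k - b' k = m k - b k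
          rw [hm'k k hk, hb'k k hk]
        have hsubi : (m' - b') i = a i - j := by
          show m' i - b' i = a i - j
          rw [hm'i, hb'i]
        have hG : mpdL (i :: L) (m' - b') g = Dit i (a i - j) (mpdL L (m - b) g) := by
          rw [mpdL_cons, hsubi,
            mpdL_idx_congr L (fun k hk => hsub k (fun h => hiL (h ▸ hk))) g]
        rw [hcoef, hF, hG]
        ring

end MpdLU

section MpdU

variable {U : Set (Fin n → ℂ)} {f g : (Fin n → ℂ) → ℂ} {q : Fin n → ℂ}

lemma maskL_finRange (a : Fin n → ℕ) : maskL (List.finRange n) a = a := by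
  funext k; simp [maskL, List.mem_finRange]

lemma mpd_congrOn (hU : IsOpen U) (h : ∀ w ∈ U, f w = g w) (a : Fin n → ℕ)
    (hq : q ∈ U) : mpd a f q = mpd a g q := by
  rw [mpd_eq_mpdL, mpd_eq_mpdL]
  exact mpdL_congrOn hU h (List.finRange n) a q hq

lemma mpd_sum {ι : Type*} (t : Finset ι) (A : ι → (Fin n → ℂ) → ℂ)
    (hU : IsOpen U) (hA : ∀ ρ ∈ t, RatOn U (A ρ)) (a : Fin n → ℕ) (hq : q ∈ U) :
    mpd a (fun w => ∑ ρ ∈ t, A ρ w) q = ∑ ρ ∈ t, mpd a (A ρ) q := by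
  rw [mpd_eq_mpdL]
  rw [mpdL_sum t A hU hA (List.finRange n) a q hq]
  rfl

lemma mpd_const_ne {a : Fin n → ℕ} (ha : a ≠ 0) (c : ℂ) :
    mpd a (fun _ => c) q = 0 := by
  obtain ⟨c', hc', hz⟩ := mpdL_const (List.finRange n) a c
  have hex : ∃ i ∈ List.finRange n, a i ≠ 0 := by
    obtain ⟨i, hi⟩ := Function.ne_iff.1 ha
    exact ⟨i, List.mem_finRange i, hi⟩
  rw [mpd_eq_mpdL, hc', hz hex]

lemma mpd_zero_idx (f : (Fin n → ℂ) → ℂ) : mpd (0 : Fin n → ℕ) f = f := by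
  rw [mpd_eq_mpdL]
  induction (List.finRange n) with
  | nil => rfl
  | cons i L ih => rw [mpdL_cons, ih]; rfl

lemma mpd_mul (hU : IsOpen U) (hf : RatOn U f) (hg : RatOn U g) (a : Fin n → ℕ)
    (hq : q ∈ U) :
    mpd a (fun w => f w * g w) q
      = ∑ b ∈ Finset.Iic a,
          (∏ k, ((a k).choose (b k) : ℂ)) * (mpd b f q * mpd (a - b) g q) := by
  rw [mpd_eq_mpdL]
  have := mpdL_mul hU hf hg (List.finRange n) (List.nodup_finRange n) a q hq
  rw [maskL_finRange] at this
  rw [this]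
  rfl

lemma coef_self (a : Fin n → ℕ) : (∏ k, ((a k).choose (a k) : ℂ)) = 1 := by simp

lemma coef_zero' (a : Fin n → ℕ) : (∏ k, ((a k).choose ((0 : Fin n → ℕ) k) : ℂ)) = 1 := by
  simp

lemma coef_ne_zero {a b : Fin n → ℕ} (h : b ≤ a) :
    (∏ k, ((a k).choose (b k) : ℂ)) ≠ 0 := by
  rw [Finset.prod_ne_zero_iff]
  intro k _
  exact_mod_cast (Nat.choose_pos (h k)).ne'

end MpdU

section Engine

variable {U : Set (Fin n → ℂ)} {q : Fin n → ℂ}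
variable {Xm Ym : Fin n → Fin n → (Fin n → ℂ) → ℂ}

lemma key_identity (hU : IsOpen U) (hq : q ∈ U)
    (hXU : ∀ γ β, RatOn U (Xm γ β)) (hYU : ∀ γ β, RatOn U (Ym γ β))
    (hinvU : ∀ v ∈ U, ∀ γ β : Fin n,
      (∑ ρ, Ym γ ρ v * Xm ρ β v) = if γ = β then (1 : ℂ) else 0)
    (γ β : Fin n) (b : Fin n → ℕ) (hb : b ≠ 0) :
    ∑ ρ, ∑ c ∈ Finset.Iic b,
      (∏ k, ((b k).choose (c k) : ℂ)) * (mpd c (Ym γ ρ) q * mpd (b - c) (Xm ρ β) q)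
      = 0 := by
  have h0 : mpd b (fun v => ∑ ρ, Ym γ ρ v * Xm ρ β v) q = 0 := by
    rw [mpd_congrOn hU (fun w hw => hinvU w hw γ β) b hq]
    exact mpd_const_ne hb _
  rw [mpd_sum Finset.univ (fun ρ => fun v => Ym γ ρ v * Xm ρ β v) hU
    (fun ρ _ => ratOn_mul (hYU γ ρ) (hXU ρ β)) b hq] at h0
  rw [← h0]
  exact Finset.sum_congr rfl fun ρ _ =>
    (mpd_mul hU (hYU γ ρ) (hXU ρ β) b hq).symm

lemma diag_facts (hq : q ∈ U)
    (hinvU : ∀ v ∈ U, ∀ γ β : Fin n,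
      (∑ ρ, Ym γ ρ v * Xm ρ β v) = if γ = β then (1 : ℂ) else 0)
    (hXdiag : ∀ γ β, γ ≠ β → Xm γ β q = 0) :
    (∀ β, Xm β β q ≠ 0) ∧ (∀ γ β, γ ≠ β → Ym γ β q = 0) ∧
      (∀ γ, Ym γ γ q * Xm γ γ q = 1) := by
  have hsum : ∀ γ β : Fin n, Ym γ β q * Xm β β q = if γ = β then (1 : ℂ) else 0 := by
    intro γ β
    have h := hinvU q hq γ β
    rw [Finset.sum_eq_single β (fun ρ _ hρ => by rw [hXdiag ρ β hρ, mul_zero])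
      (fun h => absurd (Finset.mem_univ β) h)] at h
    exact h
  have hXne : ∀ β, Xm β β q ≠ 0 := by
    intro β h0
    have := hsum β β
    rw [h0, mul_zero] at this
    simp at this
  refine ⟨hXne, fun γ β hγβ => ?_, fun γ => by simpa using hsum γ γ⟩
  have := hsum γ β
  rw [if_neg hγβ] at this
  rcases mul_eq_zero.1 this with h | h
  · exact h
  · exact absurd h (hXne β)

lemma sub_ne_zero_of_le_of_ne {b c : Fin n → ℕ} (hle : c ≤ b) (hne : c ≠ b) :
    b - c ≠ (0 : Fin n → ℕ) := by
  intro h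
  apply hne
  funext i
  have h1 : b i - c i = 0 := congrFun h i
  have h2 : c i ≤ b i := hle i
  omega

lemma sum_mul_sub_add {b c d : Fin n → ℕ} (hle : c ≤ b) :
    (∑ α, (b α - c α) * d α) + (∑ α, c α * d α) = ∑ α, b α * d α := by
  rw [← Finset.sum_add_distrib]
  exact Finset.sum_congr rfl fun α _ => by rw [← add_mul, Nat.sub_add_cancel (hle α)]

lemma sum_lt_of_le_of_ne {b c : Fin n → ℕ} (hle : c ≤ b) (hne : c ≠ b) :
    (∑ i, c i) < ∑ i, b i := by
  obtain ⟨i, hi⟩ := Function.ne_iff.1 hne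
  exact Finset.sum_lt_sum (fun i _ => hle i)
    ⟨i, Finset.mem_univ i, lt_of_le_of_ne (hle i) hi⟩

end Engine

section P1Y

variable {U : Set (Fin n → ℂ)} {q : Fin n → ℂ}
variable {Xm Ym : Fin n → Fin n → (Fin n → ℂ) → ℂ}

lemma p1_for_Y [NeZero n] (d : Fin n → ℕ) (hU : IsOpen U) (hq : q ∈ U)
    (hXU : ∀ γ β, RatOn U (Xm γ β)) (hYU : ∀ γ β, RatOn U (Ym γ β))
    (hinvU : ∀ v ∈ U, ∀ γ β : Fin n,
      (∑ ρ, Ym γ ρ v * Xm ρ β v) = if γ = β then (1 : ℂ) else 0)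
    (hX : CondP d q 1 Xm) :
    ∀ (b : Fin n → ℕ), b ≠ 0 → ∀ γ ρ, mpd b (Ym γ ρ) q ≠ 0 →
      ∃ k : ℕ, 1 ≤ k ∧ (∑ α, b α * d α) + d ρ = d γ + k * d 0 := by
  obtain ⟨hXne, hYdiag, hYX⟩ := diag_facts hq hinvU hX.1
  suffices H : ∀ N : ℕ, ∀ b : Fin n → ℕ, (∑ i, b i) ≤ N → b ≠ 0 → ∀ γ ρ,
      mpd b (Ym γ ρ) q ≠ 0 →
      ∃ k : ℕ, 1 ≤ k ∧ (∑ α, b α * d α) + d ρ = d γ + k * d 0 by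
    intro b hb γ ρ hm
    exact H (∑ i, b i) b le_rfl hb γ ρ hm
  intro N
  induction N with
  | zero =>
      intro b hbN hbne
      exfalso
      apply hbne
      funext i
      have h0 : ∑ i, b i = 0 := Nat.le_zero.1 hbN
      exact (Finset.sum_eq_zero_iff.1 h0) i (Finset.mem_univ i)
  | succ N ih =>
      intro b hbN hbne γ ρ hmpd
      have hkey := key_identity hU hq hXU hYU hinvU γ ρ b hbne
      set T : Fin n → (Fin n → ℕ) → ℂ := fun ρ' c =>
        (∏ k, ((b k).choose (c k) : ℂ)) * (mpd c (Ym γ ρ') q * mpd (b - c) (Xm ρ' ρ) q)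
        with hT
      have hsplit : ∀ ρ' : Fin n, (∑ c ∈ Finset.Iic b, T ρ' c)
          = (∑ c ∈ (Finset.Iic b).erase b, T ρ' c) + T ρ' b :=
        fun ρ' => (Finset.sum_erase_add _ _ (Finset.mem_Iic.2 le_rfl)).symm
      rw [Finset.sum_congr rfl (fun ρ' _ => hsplit ρ'), Finset.sum_add_distrib] at hkey
      have hTb : ∀ ρ' : Fin n, T ρ' b
          = (mpd b (Ym γ ρ') q) * Xm ρ' ρ q := by
        intro ρ'
        rw [hT]
        simp only []
        rw [coef_self, one_mul, show b - b = (0 : Fin n → ℕ) by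
          funext i; simp, mpd_zero_idx]
      have hTsum : (∑ ρ' : Fin n, T ρ' b) = mpd b (Ym γ ρ) q * Xm ρ ρ q := by
        rw [Finset.sum_congr rfl fun ρ' _ => hTb ρ']
        exact Finset.sum_eq_single ρ
          (fun ρ' _ hρ' => by rw [hX.1 ρ' ρ hρ', mul_zero])
          (fun h => absurd (Finset.mem_univ ρ) h)
      rw [hTsum] at hkey
      have hR : (∑ ρ' : Fin n, ∑ c ∈ (Finset.Iic b).erase b, T ρ' c) ≠ 0 := by
        intro h0
        rw [h0, zero_add] at hkey
        exact (mul_ne_zero hmpd (hXne ρ)) hkey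
      obtain ⟨ρ', _, hρ'⟩ := Finset.exists_ne_zero_of_sum_ne_zero hR
      obtain ⟨c, hc, hcne0⟩ := Finset.exists_ne_zero_of_sum_ne_zero hρ'
      have hcb : c ≠ b := (Finset.mem_erase.1 hc).1
      have hle : c ≤ b := Finset.mem_Iic.1 (Finset.mem_erase.1 hc).2
      have hY : mpd c (Ym γ ρ') q ≠ 0 := by
        intro h0; apply hcne0; rw [hT]; simp [h0]
      have hXm : mpd (b - c) (Xm ρ' ρ) q ≠ 0 := by
        intro h0; apply hcne0; rw [hT]; simp [h0]
      have hbc : b - c ≠ (0 : Fin n → ℕ) := sub_ne_zero_of_le_of_ne hle hcb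
      by_cases hc0 : c = (0 : Fin n → ℕ)
      · -- c = 0 : then ρ' = γ by diagonality of Y at q
        subst hc0
        rw [mpd_zero_idx] at hY
        have hργ : ρ' = γ := by
          by_contra hne
          exact hY (hYdiag γ ρ' (fun h => hne h.symm))
        subst hργ
        rw [show b - (0 : Fin n → ℕ) = b by funext i; simp] at hXm
        obtain ⟨k, hk1, hke⟩ := hX.2 ρ' ρ b hbne hXm
        exact ⟨k, hk1, hke⟩
      · -- c ≠ 0 : use the inductive hypothesis
        have hlt : (∑ i, c i) < ∑ i, b i := sum_lt_of_le_of_ne hle hcb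
        obtain ⟨k1, hk11, e1⟩ := ih c (by omega) hc0 γ ρ' hY
        obtain ⟨k2, hk21, e2⟩ := hX.2 ρ' ρ (b - c) hbc hXm
        refine ⟨k1 + k2, by omega, ?_⟩
        have hS := sum_mul_sub_add (b := b) (c := c) (d := d) hle
        have e2' : (∑ α, (b - c) α * d α) = ∑ α, (b α - c α) * d α := rfl
        rw [e2'] at e2
        rw [add_mul]
        generalize hK1 : k1 * d 0 = K1 at e1 ⊢
        generalize hK2 : k2 * d 0 = K2 at e2 ⊢
        omega

end P1Y

section Final

variable {U : Set (Fin n → ℂ)} {q : Fin n → ℂ}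
variable {Xm Ym : Fin n → Fin n → (Fin n → ℂ) → ℂ}

lemma final_engine [NeZero n] (d : Fin n → ℕ) (hd2 : 1 ≤ d 0)
    (hU : IsOpen U) (hq : q ∈ U)
    (hXU : ∀ γ β, RatOn U (Xm γ β)) (hYU : ∀ γ β, RatOn U (Ym γ β))
    (hinvU : ∀ v ∈ U, ∀ γ β : Fin n,
      (∑ ρ, Ym γ ρ v * Xm ρ β v) = if γ = β then (1 : ℂ) else 0)
    (hX : CondP d q 1 Xm)
    (β γ : Fin n) (a : Fin n → ℕ) (ha0 : a ≠ 0)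
    (ha : (∑ α, a α * d α) + d β = d 0 + d γ) :
    mpd a (Ym γ β) q = -(1 / (Xm γ γ q * Xm β β q)) * mpd a (Xm γ β) q := by
  obtain ⟨hXne, hYdiag, hYX⟩ := diag_facts hq hinvU hX.1
  have hkey := key_identity hU hq hXU hYU hinvU γ β a ha0
  set A : ℂ := mpd a (Ym γ β) q * Xm β β q with hA
  set B : ℂ := Ym γ γ q * mpd a (Xm γ β) q with hB
  have hpt : ∀ ρ : Fin n, ∀ c ∈ Finset.Iic a,
      (∏ k, ((a k).choose (c k) : ℂ)) * (mpd c (Ym γ ρ) q * mpd (a - c) (Xm ρ β) q)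
        = (if c = a then (if ρ = β then A else 0) else 0)
          + (if c = 0 then (if ρ = γ then B else 0) else 0) := by
    intro ρ c hc
    have hca : c ≤ a := Finset.mem_Iic.1 hc
    by_cases h1 : c = a
    · subst h1
      rw [if_pos rfl, if_neg (show ¬(c = (0 : Fin n → ℕ)) from by simpa using ha0),
        add_zero, coef_self, one_mul,
        show c - c = (0 : Fin n → ℕ) by funext i; simp, mpd_zero_idx]
      by_cases h2 : ρ = β
      · subst h2; rw [if_pos rfl, hA]
      · rw [if_neg h2, hX.1 ρ β h2, mul_zero]
    · by_cases h2 : c = 0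
      · subst h2
        rw [if_neg h1, if_pos (rfl : (0 : Fin n → ℕ) = 0), zero_add, coef_zero',
          one_mul, mpd_zero_idx,
          show a - (0 : Fin n → ℕ) = a by funext i; simp]
        by_cases h3 : ρ = γ
        · subst h3; rw [if_pos rfl, hB]
        · rw [if_neg h3, hYdiag γ ρ (fun h => h3 h.symm), zero_mul]
      · rw [if_neg h1, if_neg h2, add_zero]
        rcases eq_or_ne (mpd c (Ym γ ρ) q) 0 with h | h
        · rw [h]; ring
        rcases eq_or_ne (mpd (a - c) (Xm ρ β) q) 0 with h' | h'
        · rw [h']; ring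
        exfalso
        obtain ⟨k1, hk11, e1⟩ := p1_for_Y d hU hq hXU hYU hinvU hX c h2 γ ρ h
        obtain ⟨k2, hk21, e2⟩ := hX.2 ρ β (a - c) (sub_ne_zero_of_le_of_ne hca h1) h'
        have hS := sum_mul_sub_add (b := a) (c := c) (d := d) hca
        have e2' : (∑ α, (a - c) α * d α) = ∑ α, (a α - c α) * d α := rfl
        rw [e2'] at e2
        have hcomb : (∑ α, a α * d α) + d β = d γ + (k1 + k2) * d 0 := by
          rw [add_mul]
          generalize hK1 : k1 * d 0 = K1 at e1 ⊢
          generalize hK2 : k2 * d 0 = K2 at e2 ⊢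
          omega
        rw [ha] at hcomb
        have h2' : 2 ≤ k1 + k2 := by omega
        have hmul : 2 * d 0 ≤ (k1 + k2) * d 0 := Nat.mul_le_mul_right (d 0) h2'
        generalize hK : (k1 + k2) * d 0 = K at hcomb hmul
        omega
  rw [Finset.sum_congr rfl (fun ρ _ => Finset.sum_congr rfl (fun c hc => hpt ρ c hc))]
    at hkey
  have hcollapse : ∀ ρ : Fin n,
      (∑ c ∈ Finset.Iic a, ((if c = a then (if ρ = β then A else 0) else 0)
        + (if c = 0 then (if ρ = γ then B else 0) else 0)))
      = (if ρ = β then A else 0) + (if ρ = γ then B else 0) := by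
    intro ρ
    rw [Finset.sum_add_distrib]
    rw [Finset.sum_ite_eq' (Finset.Iic a) a (fun _ => if ρ = β then A else 0)]
    rw [Finset.sum_ite_eq' (Finset.Iic a) 0 (fun _ => if ρ = γ then B else 0)]
    simp [Finset.mem_Iic, Nat.zero_le]
  rw [Finset.sum_congr rfl (fun ρ _ => hcollapse ρ), Finset.sum_add_distrib,
    Finset.sum_ite_eq' Finset.univ β (fun _ => A),
    Finset.sum_ite_eq' Finset.univ γ (fun _ => B)] at hkey
  simp only [Finset.mem_univ, if_true] at hkey
  -- hkey : A + B = 0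
  have hYγγ := hYX γ
  have hXβ := hXne β
  have hXγ := hXne γ
  rw [hA, hB] at hkey
  field_simp
  linear_combination (Xm γ γ q) * hkey - (mpd a (Xm γ β) q) * hYγγ

end Final

end Aux16

theorem stmt_16 [NeZero n] (d : Fin n → ℕ) (hd : Antitone d)
    (hd1 : ∀ α : Fin n, α ≠ 0 → d α < d 0) (hd2 : ∀ α, 2 ≤ d α)
    (q : Fin n → ℂ)
    (Xm Ym : Fin n → Fin n → (Fin n → ℂ) → ℂ)
    (hXr : ∀ γ β, RegRat q (Xm γ β)) (hYr : ∀ γ β, RegRat q (Ym γ β))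
    (hinv : Filter.Eventually (fun v => ∀ γ β : Fin n,
        (∑ ρ, Ym γ ρ v * Xm ρ β v) = (if γ = β then (1 : ℂ) else 0) ∧
        (∑ ρ, Xm γ ρ v * Ym ρ β v) = (if γ = β then (1 : ℂ) else 0)) (nhds q))
    (hX : CondP d q 1 Xm)
    (β γ : Fin n) (a : Fin n → ℕ) (ha0 : a ≠ 0)
    (ha : (∑ α, a α * d α) + d β = d 0 + d γ) :
    mpd a (Ym γ β) q = -(1 / (Xm γ γ q * Xm β β q)) * mpd a (Xm γ β) q := by
  classical
  obtain ⟨t, htsub, htopen, hqt⟩ := mem_nhds_iff.1 hinv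
  choose pX sX hqsX hXeq using hXr
  choose pY sY hqsY hYeq using hYr
  set U : Set (Fin n → ℂ) := t ∩ ((⋂ γ, ⋂ β, {v | eval v (sX γ β) ≠ 0}) ∩
    (⋂ γ, ⋂ β, {v | eval v (sY γ β) ≠ 0})) with hUdef
  have hopen : IsOpen U := by
    refine htopen.inter (IsOpen.inter ?_ ?_) <;>
    · refine isOpen_iInter_of_finite fun γ => isOpen_iInter_of_finite fun β => ?_
      exact (isOpen_compl_singleton (x := (0 : ℂ))).preimage (continuous_evalPoly _)
  have hqU : q ∈ U := by
    refine ⟨hqt, ?_, ?_⟩ <;>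
    · rw [Set.mem_iInter]
      intro γ'
      rw [Set.mem_iInter]
      intro β'
      first
        | exact hqsX γ' β'
        | exact hqsY γ' β'
  have hvX : ∀ v ∈ U, ∀ γ' β' : Fin n, eval v (sX γ' β') ≠ 0 := by
    intro v hv γ' β'
    have h := hv.2.1
    rw [Set.mem_iInter] at h
    have h := h γ'
    rw [Set.mem_iInter] at h
    exact h β'
  have hvY : ∀ v ∈ U, ∀ γ' β' : Fin n, eval v (sY γ' β') ≠ 0 := by
    intro v hv γ' β'
    have h := hv.2.2
    rw [Set.mem_iInter] at h
    have h := h γ'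
    rw [Set.mem_iInter] at h
    exact h β'
  have hXU : ∀ γ' β', RatOn U (Xm γ' β') := fun γ' β' =>
    ⟨pX γ' β', sX γ' β', fun v hv => hvX v hv γ' β',
      fun v hv => hXeq γ' β' v (hvX v hv γ' β')⟩
  have hYU : ∀ γ' β', RatOn U (Ym γ' β') := fun γ' β' =>
    ⟨pY γ' β', sY γ' β', fun v hv => hvY v hv γ' β',
      fun v hv => hYeq γ' β' v (hvY v hv γ' β')⟩
  have hinvU : ∀ v ∈ U, ∀ γ' β' : Fin n,
      (∑ ρ, Ym γ' ρ v * Xm ρ β' v) = if γ' = β' then (1 : ℂ) else 0 :=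
    fun v hv γ' β' => (htsub hv.1 γ' β').1
  exact final_engine d (by have := hd2 0; omega) hopen hqU hXU hYU hinvU hX β γ a ha0 ha

end
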